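/- For every finite list k_1, …, k_m : E → ℤ there exists an element Q of the commutative K-subalgebra Algebra.adjoin K {u_e : e ∈ E} of A such that z^{k_1} * z^{k_2} * ⋯ * z^{k_m} = Q * z^{k_1 + k_2 + ⋯ + k_m}. (Each ℤE-homogeneous component of the Weyl algebra is a cyclic module over the polynomial subalgebra generated by the u_e, with generator the monomial z of that degree; every monic monomial is a polynomial multiple of the reduced monomial of the same degree.) -/

import Mathlib

set_option linter.unusedSectionVars false

open MvPolynomial

variable {K : Type*} [Field K] {E : Type*} [Fintype E] [DecidableEq E]

noncomputable def Wx (K : Type*) [Field K] {E : Type*} (e : E) :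
    Module.End K (MvPolynomial E K) :=
  LinearMap.mulLeft K (X e)

noncomputable def Wy (K : Type*) [Field K] {E : Type*} (e : E) :
    Module.End K (MvPolynomial E K) :=
  (pderiv e).toLinearMap

noncomputable def Wu (K : Type*) [Field K] {E : Type*} (e : E) :
    Module.End K (MvPolynomial E K) :=
  Wy K e * Wx K e

lemma pderiv_pderiv_comm (a b : E) (p : MvPolynomial E K) :
    pderiv a (pderiv b p) = pderiv b (pderiv a p) := by
  induction p using MvPolynomial.induction_on with
  | C c => simp
  | add p q hp hq => simp [hp, hq]
  | mul_X p i hp =>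
      by_cases hai : a = i
      · subst hai
        by_cases hbi : b = a
        · subst hbi; rfl
        · simp [pderiv_mul, pderiv_X_of_ne (Ne.symm hbi), hp]; ring
      · by_cases hbi : b = i
        · subst hbi
          simp [pderiv_mul, pderiv_X_of_ne (Ne.symm hai), hp]; ring
        · simp [pderiv_mul, pderiv_X_of_ne (Ne.symm hai), pderiv_X_of_ne (Ne.symm hbi), hp]

lemma commute_Wx_Wx (a b : E) : Commute (Wx K a) (Wx K b) := by
  show _ = _
  apply LinearMap.ext; intro p
  simp [Wx, Module.End.mul_apply, mul_left_comm]

lemma commute_Wy_Wy (a b : E) : Commute (Wy K a) (Wy K b) := by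
  show _ = _
  apply LinearMap.ext; intro p
  simpa [Wy, Module.End.mul_apply] using pderiv_pderiv_comm (K := K) a b p

lemma commute_Wy_Wx {a b : E} (h : a ≠ b) : Commute (Wy K a) (Wx K b) := by
  show _ = _
  apply LinearMap.ext; intro p
  simp [Wy, Wx, Module.End.mul_apply, pderiv_mul, pderiv_X_of_ne (Ne.symm h)]

/-- `z_e^{(p)}` -/
noncomputable def Wz (K : Type*) [Field K] {E : Type*} (e : E) (p : ℤ) :
    Module.End K (MvPolynomial E K) :=
  if 0 ≤ p then Wx K e ^ p.toNat else Wy K e ^ (-p).toNat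

lemma commute_Wz {a b : E} (h : a ≠ b) (p q : ℤ) :
    Commute (Wz K a p) (Wz K b q) := by
  unfold Wz
  split_ifs <;>
    exact Commute.pow_pow (by
      first
        | exact commute_Wx_Wx a b
        | exact commute_Wy_Wy a b
        | exact commute_Wy_Wx h
        | exact (commute_Wy_Wx h.symm).symm) _ _

/-- `z^k` for `k : E → ℤ` -/
noncomputable def Zpow (K : Type*) [Field K] {E : Type*} [Fintype E] [DecidableEq E]
    (k : E → ℤ) : Module.End K (MvPolynomial E K) :=
  Finset.univ.noncommProd (fun e => Wz K e (k e))
    (fun a _ b _ hab => commute_Wz hab _ _)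

lemma commute_aeval_aeval {A : Type*} [Ring A] [Algebra K A] {a b : A} (h : Commute a b)
    (p q : Polynomial K) : Commute (Polynomial.aeval a p) (Polynomial.aeval b q) := by
  rw [Polynomial.aeval_eq_sum_range, Polynomial.aeval_eq_sum_range]
  apply Commute.sum_left
  intro i _
  apply Commute.sum_right
  intro j _
  exact ((h.pow_pow i j).smul_left _).smul_right _

lemma commute_Wu (a b : E) : Commute (Wu K a) (Wu K b) := by
  rcases eq_or_ne a b with rfl | h
  · rfl
  · exact Commute.mul_left
      ((commute_Wy_Wy a b).mul_right (commute_Wy_Wx h))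
      (((commute_Wy_Wx h.symm).symm).mul_right (commute_Wx_Wx a b))

/-- The defining property of the incidence matrix of a multiquiver: every row has
at most one positive and at most one negative entry. -/
def CondM {V E : Type*} (γ : E → V → ℤ) : Prop :=
  ∀ e : E, (∀ v w : V, 0 < γ e v → 0 < γ e w → v = w) ∧
    (∀ v w : V, γ e v < 0 → γ e w < 0 → v = w)

/-!
Write `U` for the subalgebra generated by the `u_e`. Each generator moves leftwards past `U`:
`x_e u_e = (u_e - 1) x_e`, `y_e u_e = (u_e + 1) y_e`, and `x_e`, `y_e` commute with `u_a` for
`a ≠ e`; hence `z U ⊆ U z` for every monomial `z`. In one variable, `x^m y^n` is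
`x^(m-n) (x^n y^n)` or `(x^m y^m) y^(n-m)`, and `x^k y^k`, `y^k x^k` lie in `U` because
`x y = u - 1` and `y x = u` do. Factors in distinct variables commute, so
`z^k z^l ∈ U z^(k+l)`, and induction on the list gives the theorem.
-/

namespace Submonoid

variable {M : Type*} [Monoid M] (S : Submonoid M)

def leftNormalizer : Submonoid M where
  carrier := {z | ∀ q ∈ S, ∃ q' ∈ S, z * q = q' * z}
  one_mem' q hq := ⟨q, hq, by rw [one_mul, mul_one]⟩
  mul_mem' {z w} hz hw q hq := by
    obtain ⟨q', hq', hw⟩ := hw q hq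
    obtain ⟨q'', hq'', hz⟩ := hz q' hq'
    exact ⟨q'', hq'', by rw [mul_assoc, hw, ← mul_assoc, hz, mul_assoc]⟩

variable {S}

theorem pow_mul_pow_mem {a b : M} (ha : a ∈ S.leftNormalizer) (hab : a * b ∈ S) (k : ℕ) :
    a ^ k * b ^ k ∈ S := by
  induction k with
  | zero => simp [S.one_mem]
  | succ k ih =>
    obtain ⟨q, hq, hpass⟩ := ha _ ih
    have : a ^ (k + 1) * b ^ (k + 1) = q * (a * b) := by
      rw [pow_succ' a, pow_succ b, mul_assoc, ← mul_assoc (a ^ k), ← mul_assoc, hpass,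
        mul_assoc]
    exact this ▸ S.mul_mem hq hab

theorem exists_prod_map_mul_prod_map {ι : Type*} {f g h : ι → M} {l : List ι} (hl : l.Nodup)
    (hcomm : ∀ i j, i ≠ j → Commute (f i) (g j)) (hfg : ∀ i, ∃ r ∈ S, f i * g i = r * h i)
    (hh : ∀ i, h i ∈ S.leftNormalizer) :
    ∃ r ∈ S, (l.map f).prod * (l.map g).prod = r * (l.map h).prod := by
  induction l with
  | nil => exact ⟨1, S.one_mem, by simp⟩
  | cons a l ih =>
    obtain ⟨ha, hl⟩ := List.nodup_cons.1 hl
    obtain ⟨r, hr, hrl⟩ := ih hl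
    obtain ⟨ra, hra, hrla⟩ := hfg a
    obtain ⟨r', hr', hpass⟩ := hh a r hr
    have hFg : Commute (l.map f).prod (g a) := Commute.list_prod_left _ _ fun x hx => by
      obtain ⟨i, hi, rfl⟩ := List.mem_map.1 hx
      exact hcomm i a (ne_of_mem_of_not_mem hi ha)
    refine ⟨ra * r', S.mul_mem hra hr', ?_⟩
    simp only [List.map_cons, List.prod_cons]
    calc f a * (l.map f).prod * (g a * (l.map g).prod)
        = f a * g a * ((l.map f).prod * (l.map g).prod) := by
          rw [mul_assoc, ← mul_assoc (l.map f).prod, hFg.eq]; simp only [mul_assoc]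
      _ = ra * (h a * r) * (l.map h).prod := by rw [hrla, hrl]; simp only [mul_assoc]
      _ = ra * r' * (h a * (l.map h).prod) := by rw [hpass]; simp only [mul_assoc]

theorem exists_prod_map_eq_mul_sum {A : Type*} [AddMonoid A] {Z : A → M} (hZ0 : Z 0 = 1)
    (hZ : ∀ k, Z k ∈ S.leftNormalizer) (hmul : ∀ k l, ∃ r ∈ S, Z k * Z l = r * Z (k + l))
    (L : List A) : ∃ q ∈ S, (L.map Z).prod = q * Z L.sum := by
  induction L with
  | nil => exact ⟨1, S.one_mem, by simp [hZ0]⟩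
  | cons k L ih =>
    obtain ⟨q, hq, hL⟩ := ih
    obtain ⟨q', hq', hpass⟩ := hZ k q hq
    obtain ⟨r, hr, hkL⟩ := hmul k L.sum
    refine ⟨q' * r, S.mul_mem hq' hr, ?_⟩
    rw [List.map_cons, List.prod_cons, List.sum_cons, hL, ← mul_assoc, hpass, mul_assoc, hkL,
      mul_assoc]

end Submonoid

section SignedPow

variable {M : Type*} [Monoid M]

def signedPow (a b : M) (p : ℤ) : M :=
  if 0 ≤ p then a ^ p.toNat else b ^ (-p).toNat

variable (a b : M)

@[simp]
theorem signedPow_zero : signedPow a b 0 = 1 := by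
  simp [signedPow]

@[simp]
theorem signedPow_natCast (n : ℕ) : signedPow a b n = a ^ n := by
  simp [signedPow]

@[simp]
theorem signedPow_neg_natCast (n : ℕ) : signedPow a b (-n) = b ^ n := by
  rcases n.eq_zero_or_pos with rfl | hn
  · simp [signedPow]
  · rw [signedPow, if_neg (by omega), neg_neg, Int.toNat_natCast]

theorem signedPow_neg (p : ℤ) : signedPow a b (-p) = signedPow b a p := by
  obtain ⟨n, rfl | rfl⟩ := Int.eq_nat_or_neg p <;> simp

variable {a b} {S : Submonoid M}

theorem signedPow_mem_leftNormalizer (ha : a ∈ S.leftNormalizer) (hb : b ∈ S.leftNormalizer)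
    (p : ℤ) : signedPow a b p ∈ S.leftNormalizer := by
  unfold signedPow
  split_ifs
  exacts [pow_mem ha _, pow_mem hb _]

theorem exists_pow_mul_pow_eq_mul_signedPow (ha : a ∈ S.leftNormalizer)
    (hab : ∀ k, a ^ k * b ^ k ∈ S) (m n : ℕ) :
    ∃ r ∈ S, a ^ m * b ^ n = r * signedPow a b (m - n) := by
  rcases le_total n m with hnm | hmn
  · obtain ⟨r, hr, hpass⟩ := pow_mem ha (m - n) _ (hab n)
    refine ⟨r, hr, ?_⟩
    rw [← Nat.cast_sub hnm, signedPow_natCast, ← hpass, ← mul_assoc, ← pow_add,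
      Nat.sub_add_cancel hnm]
  · refine ⟨_, hab m, ?_⟩
    rw [← neg_sub, ← Nat.cast_sub hmn, signedPow_neg_natCast, mul_assoc, ← pow_add,
      Nat.add_sub_cancel' hmn]

theorem exists_signedPow_mul_signedPow (ha : a ∈ S.leftNormalizer) (hb : b ∈ S.leftNormalizer)
    (hab : a * b ∈ S) (hba : b * a ∈ S) (p q : ℤ) :
    ∃ r ∈ S, signedPow a b p * signedPow a b q = r * signedPow a b (p + q) := by
  obtain ⟨m, rfl | rfl⟩ := Int.eq_nat_or_neg p <;> obtain ⟨n, rfl | rfl⟩ := Int.eq_nat_or_neg q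
  · exact ⟨1, S.one_mem, by simp only [← Nat.cast_add, signedPow_natCast, pow_add, one_mul]⟩
  · rw [signedPow_natCast, signedPow_neg_natCast, ← sub_eq_add_neg]
    exact exists_pow_mul_pow_eq_mul_signedPow ha (S.pow_mul_pow_mem ha hab) m n
  · rw [signedPow_neg_natCast, signedPow_natCast, neg_add_eq_sub, ← neg_sub, signedPow_neg]
    exact exists_pow_mul_pow_eq_mul_signedPow hb (S.pow_mul_pow_mem hb hba) m n
  · refine ⟨1, S.one_mem, ?_⟩
    simp only [← neg_add, ← Nat.cast_add, signedPow_neg_natCast, pow_add, one_mul]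

end SignedPow

theorem Algebra.mem_leftNormalizer_adjoin {R A : Type*} [CommSemiring R] [Semiring A]
    [Algebra R A] {s : Set A} {z : A} (h : ∀ g ∈ s, ∃ q ∈ Algebra.adjoin R s, z * g = q * z) :
    z ∈ (Algebra.adjoin R s).toSubmonoid.leftNormalizer := by
  intro q hq
  induction hq using Algebra.adjoin_induction with
  | mem g hg => exact h g hg
  | algebraMap r =>
    exact ⟨algebraMap R A r, Subalgebra.algebraMap_mem _ r, (Algebra.commutes r z).symm⟩
  | add x y _ _ hx hy =>
    obtain ⟨x', hx', hx⟩ := hx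
    obtain ⟨y', hy', hy⟩ := hy
    exact ⟨x' + y', Subalgebra.add_mem _ hx' hy', by rw [mul_add, hx, hy, add_mul]⟩
  | mul x y _ _ hx hy =>
    obtain ⟨x', hx', hx⟩ := hx
    obtain ⟨y', hy', hy⟩ := hy
    exact ⟨x' * y', Subalgebra.mul_mem _ hx' hy',
      by rw [← mul_assoc, hx, mul_assoc, hy, mul_assoc]⟩

noncomputable abbrev uSubalgebra (K : Type*) [Field K] (E : Type*) :
    Subalgebra K (Module.End K (MvPolynomial E K)) :=
  Algebra.adjoin K (Set.range fun e : E => Wu K e)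

section

omit [Fintype E] [DecidableEq E]

theorem Wu_mem_uSubalgebra (e : E) : Wu K e ∈ uSubalgebra K E :=
  Algebra.subset_adjoin ⟨e, rfl⟩

theorem Wx_mul_Wy (e : E) : Wx K e * Wy K e = Wu K e - 1 := by
  refine LinearMap.ext fun p => ?_
  simp [Wx, Wy, Wu]

theorem Wx_mul_Wu (e : E) : Wx K e * Wu K e = (Wu K e - 1) * Wx K e := by
  rw [← Wx_mul_Wy, Wu, mul_assoc]

theorem Wy_mul_Wu (e : E) : Wy K e * Wu K e = (Wu K e + 1) * Wy K e := by
  calc Wy K e * Wu K e = Wy K e * (Wx K e * Wy K e + 1) := by rw [Wx_mul_Wy, sub_add_cancel]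
    _ = (Wu K e + 1) * Wy K e := by rw [Wu]; noncomm_ring

end

theorem commute_Wx_Wu {e a : E} (h : e ≠ a) : Commute (Wx K e) (Wu K a) :=
  (commute_Wy_Wx h.symm).symm.mul_right (commute_Wx_Wx e a)

theorem commute_Wy_Wu {e a : E} (h : e ≠ a) : Commute (Wy K e) (Wu K a) :=
  (commute_Wy_Wy e a).mul_right (commute_Wy_Wx h)

theorem mem_leftNormalizer_uSubalgebra {z : Module.End K (MvPolynomial E K)} {e : E}
    (he : ∃ q ∈ uSubalgebra K E, z * Wu K e = q * z) (hcomm : ∀ a, e ≠ a → Commute z (Wu K a)) :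
    z ∈ (uSubalgebra K E).toSubmonoid.leftNormalizer := by
  refine Algebra.mem_leftNormalizer_adjoin ?_
  rintro _ ⟨a, rfl⟩
  obtain rfl | hea := eq_or_ne e a
  · exact he
  · exact ⟨Wu K a, Wu_mem_uSubalgebra a, (hcomm a hea).eq⟩

theorem Wx_mem_leftNormalizer (e : E) :
    Wx K e ∈ (uSubalgebra K E).toSubmonoid.leftNormalizer :=
  mem_leftNormalizer_uSubalgebra
    ⟨_, Subalgebra.sub_mem _ (Wu_mem_uSubalgebra e) (Subalgebra.one_mem _), Wx_mul_Wu e⟩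
    fun _ => commute_Wx_Wu

theorem Wy_mem_leftNormalizer (e : E) :
    Wy K e ∈ (uSubalgebra K E).toSubmonoid.leftNormalizer :=
  mem_leftNormalizer_uSubalgebra
    ⟨_, Subalgebra.add_mem _ (Wu_mem_uSubalgebra e) (Subalgebra.one_mem _), Wy_mul_Wu e⟩
    fun _ => commute_Wy_Wu

theorem Wz_eq_signedPow (e : E) (p : ℤ) : Wz K e p = signedPow (Wx K e) (Wy K e) p :=
  rfl

theorem Wz_mem_leftNormalizer (e : E) (p : ℤ) :
    Wz K e p ∈ (uSubalgebra K E).toSubmonoid.leftNormalizer :=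
  signedPow_mem_leftNormalizer (Wx_mem_leftNormalizer e) (Wy_mem_leftNormalizer e) p

theorem exists_Wz_mul_Wz (e : E) (p q : ℤ) :
    ∃ r ∈ uSubalgebra K E, Wz K e p * Wz K e q = r * Wz K e (p + q) :=
  exists_signedPow_mul_signedPow (Wx_mem_leftNormalizer e) (Wy_mem_leftNormalizer e)
    (Wx_mul_Wy (K := K) e ▸
      Subalgebra.sub_mem _ (Wu_mem_uSubalgebra e) (Subalgebra.one_mem _))
    (Wu_mem_uSubalgebra e) p q

theorem Zpow_eq_prod_map_toList (k : E → ℤ) :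
    Zpow K k = ((Finset.univ : Finset E).toList.map fun e => Wz K e (k e)).prod := by
  rw [Zpow, ← Finset.noncommProd_toFinset _ _ _ (Finset.nodup_toList _)]
  exact Finset.noncommProd_congr (Finset.toList_toFinset _).symm (fun _ _ => rfl) _

theorem Zpow_zero : Zpow K (0 : E → ℤ) = 1 := by
  simp [Zpow_eq_prod_map_toList, Wz_eq_signedPow]

theorem Zpow_mem_leftNormalizer (k : E → ℤ) :
    Zpow K k ∈ (uSubalgebra K E).toSubmonoid.leftNormalizer := by
  rw [Zpow_eq_prod_map_toList]
  refine Submonoid.list_prod_mem _ fun z hz => ?_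
  obtain ⟨e, -, rfl⟩ := List.mem_map.1 hz
  exact Wz_mem_leftNormalizer e _

theorem exists_Zpow_mul_Zpow (k l : E → ℤ) :
    ∃ r ∈ uSubalgebra K E, Zpow K k * Zpow K l = r * Zpow K (k + l) := by
  simp only [Zpow_eq_prod_map_toList]
  exact Submonoid.exists_prod_map_mul_prod_map (Finset.nodup_toList _)
    (fun _ _ h => commute_Wz h _ _) (fun e => exists_Wz_mul_Wz e _ _)
    (fun e => Wz_mem_leftNormalizer e _)

theorem monomial_eq_poly_mul_reduced_general {K E : Type*} [Field K]
    [Fintype E] [DecidableEq E] (L : List (E → ℤ)) :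
    ∃ Q ∈ Algebra.adjoin K (Set.range fun e : E => Wu K e),
      (L.map fun k => Zpow K k).prod = Q * Zpow K L.sum :=
  Submonoid.exists_prod_map_eq_mul_sum Zpow_zero Zpow_mem_leftNormalizer exists_Zpow_mul_Zpow L

/-- Every product of monomials `z^{k_1} ⋯ z^{k_m}` in the Weyl algebra is a
polynomial (in the `u_e`) multiple of the reduced monomial `z^{k_1 + ⋯ + k_m}`:
each `ℤE`-homogeneous component is cyclic over the polynomial subalgebra
generated by the `u_e`, with generator the monomial `z` of that degree. -/
theorem monomial_eq_poly_mul_reduced {K E : Type*} [Field K] [CharZero K]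
    [Fintype E] [DecidableEq E] (L : List (E → ℤ)) :
    ∃ Q ∈ Algebra.adjoin K (Set.range fun e : E => Wu K e),
      (L.map fun k => Zpow K k).prod = Q * Zpow K L.sum :=
  monomial_eq_poly_mul_reduced_general L
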